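/- Let R be a TRS and Π a set of forbidden patterns. Let π ∈ Π be a stable pattern that matches the subterm s|_p of a term s and thereby forbids the position p.q in s. If s →*_{R,Π} t by a (possibly empty) sequence of steps each at a position parallel to or strictly below p.q, then the position p.q is forbidden in t. -/
import Mathlib


set_option autoImplicit false

namespace FP

/-- First-order terms over a signature `F` with arities `ar`; variables are naturals. -/
inductive Tm (F : Type) (ar : F → ℕ) : Type
  | var : ℕ → Tm F ar
  | app : (f : F) → (Fin (ar f) → Tm F ar) → Tm F ar

variable {F : Type} {ar : F → ℕ}

/-- The subterm of `t` at position `p` (if `p` is a position of `t`). -/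
def subtermAt : Tm F ar → List ℕ → Option (Tm F ar)
  | t, [] => some t
  | .var _, _ :: _ => none
  | .app f ts, i :: p => if h : i < ar f then subtermAt (ts ⟨i, h⟩) p else none

/-- Replacement `t[s]_p` (if `p` is a position of `t`). -/
def replaceAt : Tm F ar → List ℕ → Tm F ar → Option (Tm F ar)
  | _, [], s => some s
  | .var _, _ :: _, _ => none
  | .app f ts, i :: p, s =>
      if h : i < ar f then
        (replaceAt (ts ⟨i, h⟩) p s).map fun u => Tm.app f (Function.update ts ⟨i, h⟩ u)
      else none

/-- Filling a context `(c, p)` (a term `c` together with a hole position `p`) with `s`,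
i.e. `c[s]_p`. -/
def fill (c : Tm F ar) (p : List ℕ) (s : Tm F ar) : Tm F ar :=
  (replaceAt c p s).getD s

/-- `p ∈ Pos t`. -/
def IsPos (t : Tm F ar) (p : List ℕ) : Prop := (subtermAt t p).isSome

/-- Application of a substitution. -/
def subst (σ : ℕ → Tm F ar) : Tm F ar → Tm F ar
  | .var x => σ x
  | .app f ts => Tm.app f fun i => subst σ (ts i)

/-- The set of variables of a term. -/
def vars : Tm F ar → Set ℕ
  | .var x => {x}
  | .app _ ts => ⋃ i, vars (ts i)

/-- A rewrite rule `lhs → rhs`. -/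
structure Rule (F : Type) (ar : F → ℕ) where
  lhs : Tm F ar
  rhs : Tm F ar

/-- `R` is a TRS: left-hand sides are no variables und `Var(r) ⊆ Var(l)`. -/
def IsTRS (R : Set (Rule F ar)) : Prop :=
  ∀ r ∈ R, (∀ x, r.lhs ≠ Tm.var x) ∧ vars r.rhs ⊆ vars r.lhs

/-- `s →_R t` contracting the redex at position `p`. -/
def RewriteAt (R : Set (Rule F ar)) (p : List ℕ) (s t : Tm F ar) : Prop :=
  ∃ r ∈ R, ∃ σ : ℕ → Tm F ar,
    subtermAt s p = some (subst σ r.lhs) ∧ replaceAt s p (subst σ r.rhs) = some t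

/-- `p < q` : strict prefix of positions. -/
def StrictPrefix (p q : List ℕ) : Prop := p <+: q ∧ p ≠ q

/-- `p ∥ q` : parallel (incomparable) positions. -/
def Par (p q : List ℕ) : Prop := ¬ p <+: q ∧ ¬ q <+: p

/-- Flags of forbidden patterns: here / below / above. -/
inductive Flag : Type
  | h | b | a
deriving DecidableEq

/-- A forbidden pattern `⟨t, p, λ⟩`. -/
structure Pattern (F : Type) (ar : F → ℕ) where
  pat : Tm F ar
  pos : List ℕ
  flag : Flag

/-- `q ∈ P_{t,p}(s)` : `q = o.p` for a match `s|_o = tσ`. -/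
def PTP (t : Tm F ar) (p : List ℕ) (s : Tm F ar) (q : List ℕ) : Prop :=
  ∃ (o : List ℕ) (σ : ℕ → Tm F ar), subtermAt s o = some (subst σ t) ∧ q = o ++ p

/-- `o ∈ P_π(s)`. -/
def PPat (π : Pattern F ar) (s : Tm F ar) (o : List ℕ) : Prop :=
  match π.flag with
  | Flag.a => ∃ q, PTP π.pat π.pos s q ∧ StrictPrefix o q
  | Flag.b => ∃ q, PTP π.pat π.pos s q ∧ StrictPrefix q o
  | Flag.h => PTP π.pat π.pos s o

/-- Position `o` is forbidden in `s` w.r.t. the pattern set `Pi`. -/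
def Forbidden (Pi : Set (Pattern F ar)) (s : Tm F ar) (o : List ℕ) : Prop :=
  ∃ π ∈ Pi, PPat π s o

/-- A forbidden-pattern rewrite step at position `p` : an `R`-step at an allowed position. -/
def FPStepAt (R : Set (Rule F ar)) (Pi : Set (Pattern F ar)) (p : List ℕ)
    (s t : Tm F ar) : Prop :=
  RewriteAt R p s t ∧ ¬ Forbidden Pi s p

/-- `s →_{R,Π} t`. -/
def FPStep (R : Set (Rule F ar)) (Pi : Set (Pattern F ar)) (s t : Tm F ar) : Prop :=
  ∃ p, FPStepAt R Pi p s t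

/-- `R` is `Π`-terminating: there is no infinite `→_{R,Π}`-sequence. -/
def PiTerminating (R : Set (Rule F ar)) (Pi : Set (Pattern F ar)) : Prop :=
  ¬ ∃ f : ℕ → Tm F ar, ∀ n, FPStep R Pi (f n) (f (n + 1))

/-- The subterm of `w` at `p` is `Π`-terminating in its context: there is no infinite
`→_{R,Π}`-sequence from `w` with all steps at, below or parallel to `p` and
infinitely many steps at or below `p`. -/
def TermAtPos (R : Set (Rule F ar)) (Pi : Set (Pattern F ar)) (w : Tm F ar)
    (p : List ℕ) : Prop :=
  ¬ ∃ (f : ℕ → Tm F ar) (q : ℕ → List ℕ),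
      f 0 = w ∧ (∀ n, FPStepAt R Pi (q n) (f n) (f (n + 1))) ∧
      (∀ n, ¬ StrictPrefix (q n) p) ∧ (∀ m, ∃ n, m ≤ n ∧ p <+: q n)

/-- `s` is `Π`-terminating in the context `C[□]_p`. -/
def TermInCtx (R : Set (Rule F ar)) (Pi : Set (Pattern F ar)) (C : Tm F ar)
    (p : List ℕ) (s : Tm F ar) : Prop :=
  TermAtPos R Pi (fill C p s) p

/-- `s` is minimally non-`Π`-terminating in the context `C[□]_q` : `s` is
non-`Π`-terminating in `C[□]_q` and every proper subterm `s|_p` is `Π`-terminating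
in the context `C[s[□]_p]_q`. -/
def MinNonTerm (R : Set (Rule F ar)) (Pi : Set (Pattern F ar)) (C : Tm F ar)
    (q : List ℕ) (s : Tm F ar) : Prop :=
  ¬ TermInCtx R Pi C q s ∧
  ∀ p u, p ≠ [] → subtermAt s p = some u → TermAtPos R Pi (fill C q s) (q ++ p)

/-- Linearity of a term. -/
def Linear (t : Tm F ar) : Prop :=
  ∀ x p q, subtermAt t p = some (Tm.var x) → subtermAt t q = some (Tm.var x) → p = q

/-- The rule `r` overlaps the term `t` at (non-variable) position `p` :
`r.lhs` and `t|_p` unify (for variable-disjoint terms: they have a common instance). -/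
def OverlapsAt (r : Rule F ar) (t : Tm F ar) (p : List ℕ) : Prop :=
  ∃ u, subtermAt t p = some u ∧ (∃ f ts, u = Tm.app f ts) ∧
    ∃ σ τ : ℕ → Tm F ar, subst σ r.lhs = subst τ u

/-- Stability of a forbidden pattern w.r.t. `R`. -/
def StablePat (R : Set (Rule F ar)) (π : Pattern F ar) : Prop :=
  Linear π.pat ∧
  ((π.flag = Flag.b ∧ ∀ r ∈ R, ∀ p, Par p π.pos → ¬ OverlapsAt r π.pat p) ∨
   (π.flag = Flag.h ∧
      ∀ r ∈ R, ∀ p, (Par p π.pos ∨ StrictPrefix π.pos p) → ¬ OverlapsAt r π.pat p))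

/-- `Stb(Π)` : the stable patterns of `Π`. -/
def Stb (R : Set (Rule F ar)) (Pi : Set (Pattern F ar)) : Set (Pattern F ar) :=
  {π ∈ Pi | StablePat R π}

/-- `Π_orth` : the patterns of `Π` with flag `h` or `b`, linear, and not overlapped by
any rule of `R` at any position parallel to or below the pattern position. -/
def PiOrth (R : Set (Rule F ar)) (Pi : Set (Pattern F ar)) : Set (Pattern F ar) :=
  {π ∈ Pi | (π.flag = Flag.h ∨ π.flag = Flag.b) ∧ Linear π.pat ∧
    ∀ r ∈ R, ∀ p, (Par p π.pos ∨ StrictPrefix π.pos p) → ¬ OverlapsAt r π.pat p}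

/-! ### The extended signature with marked symbols and the token symbol `T` -/

/-- The extension of the signature `F` by a marked copy `f#` of each symbol and a
fresh token symbol `T`. -/
inductive ESym (F : Type) : Type
  | base : F → ESym F
  | mark : F → ESym F
  | token : ESym F

/-- Arities on the extended signature (the token symbol is unary). -/
def ear (ar : F → ℕ) : ESym F → ℕ
  | .base f => ar f
  | .mark f => ar f
  | .token => 1

/-- Terms over the extended signature. -/
abbrev ETm (F : Type) (ar : F → ℕ) : Type := Tm (ESym F) (ear ar)

/-- Embedding of terms into the extended signature. -/
def embed : Tm F ar → ETm F ar
  | .var x => .var x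
  | .app f ts => .app (ESym.base f) fun i => embed (ts i)

/-- `erase` : unmark all marked symbols and replace `T(s')` by `s'`. -/
def eraseT : ETm F ar → Tm F ar
  | .var x => .var x
  | .app (ESym.base f) ts => .app f fun i => eraseT (ts i)
  | .app (ESym.mark f) ts => .app f fun i => eraseT (ts i)
  | .app ESym.token ts => eraseT (ts ⟨0, Nat.one_pos⟩)

/-- Mark the root symbol of a term (`l#`). -/
def markRoot : Tm F ar → ETm F ar
  | .var x => .var x
  | .app f ts => .app (ESym.mark f) fun i => embed (ts i)

/-- `T(u)`. -/
def tok (u : ETm F ar) : ETm F ar := Tm.app ESym.token fun _ => u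

def embedRule (r : Rule F ar) : Rule (ESym F) (ear ar) := ⟨embed r.lhs, embed r.rhs⟩

def embedTRS (R : Set (Rule F ar)) : Set (Rule (ESym F) (ear ar)) := embedRule '' R

/-- A contextual rule `lhs → rhs [c]`, the context given as a term `ctx` over the
extended signature together with its hole position `cpos`. -/
structure CRule (F : Type) (ar : F → ℕ) where
  lhs : ETm F ar
  rhs : ETm F ar
  ctx : ETm F ar
  cpos : List ℕ

/-- `f` is a defined symbol of `R`. -/
def Defined (R : Set (Rule F ar)) (f : F) : Prop :=
  ∃ r ∈ R, ∃ ts, r.lhs = Tm.app f ts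

/-- `f` occurs in the right-hand side of some rule of `R`. -/
def OccursInRhs (R : Set (Rule F ar)) (f : F) : Prop :=
  ∃ r ∈ R, ∃ p ts, subtermAt r.rhs p = some (Tm.app f ts)

/-- `DP_c(R)` : the contextual dependency pairs
`l# → (r|_p)# [r[□]_p]` for `p` a position of `r` with defined root that is not
forbidden w.r.t. `Stb(Π)`. -/
def DPc (R : Set (Rule F ar)) (Pi : Set (Pattern F ar)) : Set (CRule F ar) :=
  { c | ∃ r ∈ R, ∃ p u, subtermAt r.rhs p = some u ∧
      (∃ f ts, u = Tm.app f ts ∧ Defined R f) ∧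
      ¬ Forbidden (Stb R Pi) r.rhs p ∧
      c = ⟨markRoot r.lhs, markRoot u, embed r.rhs, p⟩ }

/-- `V_c(R)` : the variable-descent pairs `l# → T(x) [r[□]_p]` for `r|_p = x ∈ Var`. -/
def Vc (R : Set (Rule F ar)) : Set (CRule F ar) :=
  { c | ∃ r ∈ R, ∃ p x, subtermAt r.rhs p = some (Tm.var x) ∧
      c = ⟨markRoot r.lhs, tok (Tm.var x), embed r.rhs, p⟩ }

/-- `A_c(R)` : the activation pairs `T(f(x₁,…,x_k)) → f#(x₁,…,x_k) [□]` for
defined `f` occurring in some right-hand side. -/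
def Ac (R : Set (Rule F ar)) : Set (CRule F ar) :=
  { c | ∃ f, Defined R f ∧ OccursInRhs R f ∧
      c = ⟨tok (Tm.app (ESym.base f) fun j => Tm.var j.val),
           Tm.app (ESym.mark f) fun j => Tm.var j.val,
           Tm.var 0, []⟩ }

/-- `S_c(R)` : the shift pairs `T(f(x₁,…,x_k)) → T(x_i) [f(x₁,…,□,…,x_k)]` for
`f` occurring in some right-hand side. -/
def Sc (R : Set (Rule F ar)) : Set (CRule F ar) :=
  { c | ∃ f, OccursInRhs R f ∧ ∃ i : Fin (ar f),
      c = ⟨tok (Tm.app (ESym.base f) fun j => Tm.var j.val),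
           tok (Tm.var i.val),
           Tm.app (ESym.base f) fun j => Tm.var j.val,
           [i.val]⟩ }

/-- `CDP(R)` : all (extended) contextual dependency pairs of `R` w.r.t. `Π`. -/
def CDP (R : Set (Rule F ar)) (Pi : Set (Pattern F ar)) : Set (CRule F ar) :=
  DPc R Pi ∪ Vc R ∪ Ac R ∪ Sc R

/-- No occurrence of the token symbol `T`. -/
def TokenFree (u : ETm F ar) : Prop :=
  ∀ (p : List ℕ) (ts : Fin (ear ar ESym.token) → ETm F ar),
    subtermAt u p ≠ some (Tm.app ESym.token ts)

/-- The token symbol occurs at most at the root. -/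
def TokenOnlyRoot (u : ETm F ar) : Prop :=
  TokenFree u ∨ ∃ w, u = tok w ∧ TokenFree w

/-- `(P, R, Π, T)` is an FP-CDP problem: the token symbol occurs only at the root of
left- and right-hand sides of `P` (and not in contexts). -/
def IsCDPProblem (P : Set (CRule F ar)) : Prop :=
  ∀ c ∈ P, TokenOnlyRoot c.lhs ∧ TokenOnlyRoot c.rhs ∧ TokenFree c.ctx

/-- `p_i'` : the accumulated hole positions `p_1.p_2.⋯.p_i` of a sequence of CDPs. -/
def chainPos (α : ℕ → CRule F ar) : ℕ → List ℕ
  | 0 => []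
  | n + 1 => chainPos α n ++ (α n).cpos

/-- One `→_P`-step with contextual rule `c` (read as `lhs → ctx[rhs]`) under
substitution `σ` at position `p` : from `s` to `t`. -/
def cStep (c : CRule F ar) (σ : ℕ → ETm F ar) (p : List ℕ) (s t : ETm F ar) : Prop :=
  subtermAt s p = some (subst σ c.lhs) ∧
  replaceAt s p (fill (subst σ c.ctx) c.cpos (subst σ c.rhs)) = some t

/-- A finite `→*_R`-segment of a chain from `u` to `v` : all steps at positions
not above-or-equal `p` and each step allowed (w.r.t. `Π`) in the erased term. -/
def RSeg (R : Set (Rule F ar)) (Pi : Set (Pattern F ar)) (p : List ℕ)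
    (u v : ETm F ar) : Prop :=
  ∃ (m : ℕ) (g : ℕ → ETm F ar) (q : ℕ → List ℕ), g 0 = u ∧ g m = v ∧
    ∀ k < m, RewriteAt (embedTRS R) (q k) (g k) (g (k + 1)) ∧
      ¬ q k <+: p ∧ ¬ Forbidden Pi (eraseT (g k)) (q k)

/-- Witness data for an infinite FP-CDP chain `α` of the problem `(P, R, Π, T)` :
a family of substitutions `σ` (the pairs are renamed apart) and the terms `A i`
(before the `i`-th `→_P`-step) and `B i` (after it). -/
def ChainWitness (P : Set (CRule F ar)) (R : Set (Rule F ar)) (Pi : Set (Pattern F ar))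
    (α : ℕ → CRule F ar) (σ : ℕ → ℕ → ETm F ar) (A B : ℕ → ETm F ar) : Prop :=
  (∀ i, α i ∈ P) ∧
  (∀ i, cStep (α i) (σ i) (chainPos α i) (A i) (B i)) ∧
  (∀ i, ¬ Forbidden Pi (eraseT (A i)) (chainPos α i)) ∧
  (∀ i, RSeg R Pi (chainPos α (i + 1)) (B i) (A (i + 1))) ∧
  (∀ i, (∃ ts, (α i).rhs = Tm.app ESym.token ts) → B i = A (i + 1))

/-- `α` is an infinite FP-CDP chain of `(P, R, Π, T)`. -/
def IsChain (P : Set (CRule F ar)) (R : Set (Rule F ar)) (Pi : Set (Pattern F ar))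
    (α : ℕ → CRule F ar) : Prop :=
  ∃ σ A B, ChainWitness P R Pi α σ A B

/-- The subterm of the extended term `w` at `p` is `Π`-terminating in its context
(w.r.t. `R`) : no infinite restricted reduction (allowedness checked on erased terms). -/
def TermAtPosE (R : Set (Rule F ar)) (Pi : Set (Pattern F ar)) (w : ETm F ar)
    (p : List ℕ) : Prop :=
  ¬ ∃ (f : ℕ → ETm F ar) (q : ℕ → List ℕ),
      f 0 = w ∧
      (∀ n, RewriteAt (embedTRS R) (q n) (f n) (f (n + 1)) ∧
        ¬ Forbidden Pi (eraseT (f n)) (q n)) ∧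
      (∀ n, ¬ StrictPrefix (q n) p) ∧ (∀ m, ∃ n, m ≤ n ∧ p <+: q n)

/-- Minimality of a chain: every subterm of `c_i'[t_iσ]_{p_i'}` strictly below `p_i'`
is `Π`-terminating in its context (w.r.t. `R`). -/
def MinCond (R : Set (Rule F ar)) (Pi : Set (Pattern F ar)) (α : ℕ → CRule F ar)
    (B : ℕ → ETm F ar) : Prop :=
  ∀ i q, StrictPrefix (chainPos α (i + 1)) q → IsPos (B i) q → TermAtPosE R Pi (B i) q

/-- `α` is an infinite minimal FP-CDP chain of `(P, R, Π, T)`. -/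
def IsMinChain (P : Set (CRule F ar)) (R : Set (Rule F ar)) (Pi : Set (Pattern F ar))
    (α : ℕ → CRule F ar) : Prop :=
  ∃ σ A B, ChainWitness P R Pi α σ A B ∧ MinCond R Pi α B

/-- Witness data for a finite FP-CDP chain `α 0, …, α (n-1)`. -/
def FinChainWitness (P : Set (CRule F ar)) (R : Set (Rule F ar)) (Pi : Set (Pattern F ar))
    (n : ℕ) (α : ℕ → CRule F ar) (σ : ℕ → ℕ → ETm F ar) (A B : ℕ → ETm F ar) : Prop :=
  (∀ i < n, α i ∈ P) ∧
  (∀ i < n, cStep (α i) (σ i) (chainPos α i) (A i) (B i)) ∧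
  (∀ i < n, ¬ Forbidden Pi (eraseT (A i)) (chainPos α i)) ∧
  (∀ i, i + 1 < n → RSeg R Pi (chainPos α (i + 1)) (B i) (A (i + 1))) ∧
  (∀ i, i + 1 < n → (∃ ts, (α i).rhs = Tm.app ESym.token ts) → B i = A (i + 1))

/-- `α 0, …, α (n-1)` is a finite FP-CDP chain of `(P, R, Π, T)`. -/
def IsFinChain (P : Set (CRule F ar)) (R : Set (Rule F ar)) (Pi : Set (Pattern F ar))
    (n : ℕ) (α : ℕ → CRule F ar) : Prop :=
  ∃ σ A B, FinChainWitness P R Pi n α σ A B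

/-- The FP-CDP problem `(P, R, Π, T)` is finite: no infinite minimal FP-CDP chain. -/
def FiniteProb (P : Set (CRule F ar)) (R : Set (Rule F ar)) (Pi : Set (Pattern F ar)) :
    Prop :=
  ¬ ∃ α : ℕ → CRule F ar, IsMinChain P R Pi α

/-- Nesting a list of contexts around an inner term:
`nest [(c₁,p₁),…,(c_n,p_n)] t = c₁[c₂[… c_n[t]_{p_n} …]_{p₂}]_{p₁}`. -/
def nest : List (Tm F ar × List ℕ) → Tm F ar → Tm F ar
  | [], t => t
  | (c, p) :: rest, t => fill c p (nest rest t)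

/-- `p_1.p_2.⋯.p_n` for the first `n` contexts of a sequence of CDPs. -/
def seqPos (β : ℕ → CRule F ar) (n : ℕ) : List ℕ :=
  (List.range n).foldr (fun i acc => (β i).cpos ++ acc) []

/-- The nested-context term `c_1[c_2[… c_n[erase(t_n)]_{p_n} …]_{p_2}]_{p_1}` of the
first `n` CDPs of a sequence. -/
def seqNest (β : ℕ → CRule F ar) (n : ℕ) : Tm F ar :=
  nest ((List.range n).map fun i => (eraseT (β i).ctx, (β i).cpos))
    (eraseT (β (n - 1)).rhs)

/-- Reading a contextual rule `l → r [c]` as the plain rule `l → c[r]`. -/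
def plainCRule (c : CRule F ar) : Rule (ESym F) (ear ar) :=
  ⟨c.lhs, fill c.ctx c.cpos c.rhs⟩

/-! ### Auxiliary lemmas for Statement 11 -/

lemma subtermAt_append (s : Tm F ar) (p q : List ℕ) :
    subtermAt s (p ++ q) = (subtermAt s p).bind (fun u => subtermAt u q) := by
  induction p generalizing s with
  | nil => simp [subtermAt]
  | cons i p ih =>
    cases s with
    | var x => simp [subtermAt]
    | app f ts =>
      simp only [List.cons_append, subtermAt]
      split
      · exact ih _
      · simp

lemma replaceAt_isSome {s w : Tm F ar} {q : List ℕ} (h : subtermAt s q = some w)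
    (v : Tm F ar) : ∃ w', replaceAt s q v = some w' := by
  induction q generalizing s with
  | nil => exact ⟨v, by simp [replaceAt]⟩
  | cons i q ih =>
    cases s with
    | var x => simp [subtermAt] at h
    | app f ts =>
      simp only [subtermAt] at h
      split at h
      · obtain ⟨w', hw'⟩ := ih h
        refine ⟨Tm.app f (Function.update ts ⟨i, by assumption⟩ w'), ?_⟩
        simp [replaceAt, *]
      · exact absurd h (by simp)

lemma subtermAt_replaceAt_par {s t u : Tm F ar} {p' p : List ℕ}
    (hpar : Par p' p) (h : replaceAt s p' u = some t) :
    subtermAt t p = subtermAt s p := by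
  induction p' generalizing s t p with
  | nil => exact absurd (List.nil_prefix) hpar.1
  | cons i p' ih =>
    cases p with
    | nil => exact absurd List.nil_prefix hpar.2
    | cons j p0 =>
      cases s with
      | var x => simp [replaceAt] at h
      | app f ts =>
        simp only [replaceAt] at h
        split at h
        · rename_i hi
          obtain ⟨u', hu', rfl⟩ := Option.map_eq_some_iff.mp h
          by_cases hij : j = i
          · subst hij
            have hpar' : Par p' p0 := by
              constructor
              · exact fun hp => hpar.1 (List.cons_prefix_cons.mpr ⟨rfl, hp⟩)
              · exact fun hp => hpar.2 (List.cons_prefix_cons.mpr ⟨rfl, hp⟩)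
            simp only [subtermAt, dif_pos hi, Function.update_self]
            exact ih hpar' hu'
          · simp only [subtermAt]
            split
            · rename_i hj
              rw [Function.update_of_ne (by simp [Fin.ext_iff, hij])]
            · rfl
        · exact absurd h (by simp)

lemma replaceAt_append_of_subterm {s t u sp : Tm F ar} {p q : List ℕ}
    (h : replaceAt s (p ++ q) u = some t) (hs : subtermAt s p = some sp) :
    ∃ tp, replaceAt sp q u = some tp ∧ subtermAt t p = some tp := by
  induction p generalizing s t with
  | nil =>
    simp only [subtermAt] at hs
    injection hs with hs; subst hs
    exact ⟨t, h, by simp [subtermAt]⟩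
  | cons i p ih =>
    cases s with
    | var x => simp [replaceAt] at h
    | app f ts =>
      simp only [List.cons_append, replaceAt] at h
      simp only [subtermAt] at hs
      split at h
      · rename_i hi
        rw [dif_pos hi] at hs
        obtain ⟨u', hu', rfl⟩ := Option.map_eq_some_iff.mp h
        obtain ⟨tp, h1, h2⟩ := ih hu' hs
        exact ⟨tp, h1, by simp [subtermAt, dif_pos hi, Function.update_self, h2]⟩
      · exact absurd h (by simp)

lemma mem_vars_iff {u : Tm F ar} {x : ℕ} :
    x ∈ vars u ↔ ∃ p, subtermAt u p = some (Tm.var x) := by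
  induction u with
  | var y =>
    constructor
    · intro h
      have : x = y := h
      exact ⟨[], by simp [subtermAt, this]⟩
    · rintro ⟨p, hp⟩
      cases p with
      | nil => injection hp with hp; injection hp with hp; exact hp.symm
      | cons i p => simp [subtermAt] at hp
  | app f ts ih =>
    constructor
    · intro h
      obtain ⟨i, hi⟩ := Set.mem_iUnion.mp h
      obtain ⟨p, hp⟩ := (ih i).mp hi
      exact ⟨i.val :: p, by simp [subtermAt, i.isLt, Fin.eta, hp]⟩
    · rintro ⟨p, hp⟩
      cases p with
      | nil => simp [subtermAt] at hp
      | cons i p =>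
        simp only [subtermAt] at hp
        split at hp
        · rename_i hi
          exact Set.mem_iUnion.mpr ⟨⟨i, hi⟩, (ih _).mpr ⟨p, hp⟩⟩
        · exact absurd hp (by simp)

lemma subst_congr {σ τ : ℕ → Tm F ar} {u : Tm F ar}
    (h : ∀ y ∈ vars u, σ y = τ y) : subst σ u = subst τ u := by
  induction u with
  | var y => exact h y rfl
  | app f ts ih =>
    simp only [subst]
    congr 1
    funext i
    exact ih i fun y hy => h y (Set.mem_iUnion.mpr ⟨i, hy⟩)

lemma linear_child {f : F} {ts : Fin (ar f) → Tm F ar} (h : Linear (Tm.app f ts))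
    (i : Fin (ar f)) : Linear (ts i) := by
  intro x p q hp hq
  have h1 : subtermAt (Tm.app f ts) (i.val :: p) = some (Tm.var x) := by
    simp [subtermAt, i.isLt, Fin.eta, hp]
  have h2 : subtermAt (Tm.app f ts) (i.val :: q) = some (Tm.var x) := by
    simp [subtermAt, i.isLt, Fin.eta, hq]
  have := h x _ _ h1 h2
  exact List.tail_eq_of_cons_eq this

lemma subtermAt_subst {τ : ℕ → Tm F ar} {u w : Tm F ar} {q : List ℕ}
    (h : subtermAt (subst τ u) q = some w) :
    (∃ f ts, subtermAt u q = some (Tm.app f ts) ∧ w = subst τ (Tm.app f ts)) ∨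
    (∃ q1 q2 x, q = q1 ++ q2 ∧ subtermAt u q1 = some (Tm.var x) ∧
      subtermAt (τ x) q2 = some w) := by
  induction u generalizing q with
  | var x => exact Or.inr ⟨[], q, x, rfl, rfl, h⟩
  | app f ts ih =>
    cases q with
    | nil =>
      simp only [subtermAt] at h
      injection h with h
      exact Or.inl ⟨f, ts, rfl, h.symm⟩
    | cons i q' =>
      simp only [subst, subtermAt] at h
      split at h
      · rename_i hi
        rcases ih ⟨i, hi⟩ h with ⟨g, us, h1, h2⟩ | ⟨q1, q2, x, rfl, h1, h2⟩
        · exact Or.inl ⟨g, us, by simp [subtermAt, dif_pos hi, h1], h2⟩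
        · exact Or.inr ⟨i :: q1, q2, x, rfl, by simp [subtermAt, dif_pos hi, h1], h2⟩
      · exact absurd h (by simp)

lemma replaceAt_subst_var {τ : ℕ → Tm F ar} {pat : Tm F ar} {q1 q2 : List ℕ} {x : ℕ}
    {u w' : Tm F ar}
    (hlin : Linear pat) (h1 : subtermAt pat q1 = some (Tm.var x))
    (h2 : replaceAt (τ x) q2 u = some w') :
    replaceAt (subst τ pat) (q1 ++ q2) u
      = some (subst (Function.update τ x w') pat) := by
  induction pat generalizing q1 with
  | var y =>
    cases q1 with
    | nil =>
      simp only [subtermAt] at h1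
      injection h1 with h1
      injection h1 with h1
      subst h1
      simpa [subst, Function.update_self] using h2
    | cons i q => simp [subtermAt] at h1
  | app f ts ih =>
    cases q1 with
    | nil => simp [subtermAt] at h1
    | cons i q1' =>
      simp only [subtermAt] at h1
      split at h1
      · rename_i hi
        have hrec := ih ⟨i, hi⟩ (linear_child hlin ⟨i, hi⟩) h1
        simp only [subst, List.cons_append, replaceAt, List.append_eq,
          dif_pos hi, hrec, Option.map_some]
        congr 1
        congr 1
        funext j
        by_cases hj : j = ⟨i, hi⟩
        · subst hj; simp [Function.update_self]
        · rw [Function.update_of_ne hj]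
          refine subst_congr fun y hy => ?_
          rw [Function.update_of_ne]
          intro hyx
          subst hyx
          obtain ⟨pp, hpp⟩ := mem_vars_iff.mp hy
          have hj1 : subtermAt (Tm.app f ts) (j.val :: pp) = some (Tm.var y) := by
            simp [subtermAt, j.isLt, Fin.eta, hpp]
          have hj2 : subtermAt (Tm.app f ts) (i :: q1') = some (Tm.var y) := by
            simp [subtermAt, dif_pos hi, h1]
          have := hlin y _ _ hj1 hj2
          apply hj
          have : j.val = i := List.head_eq_of_cons_eq this
          exact Fin.ext this
      · exact absurd h1 (by simp)

lemma stable_step_preserve {R : Set (Rule F ar)} {Pi : Set (Pattern F ar)}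
    {π : Pattern F ar} (hπ : π ∈ Pi) (hst : StablePat R π)
    {s t : Tm F ar} {p pq p' : List ℕ} {τ : ℕ → Tm F ar}
    (hmatch : subtermAt s p = some (subst τ π.pat))
    (hforb : (π.flag = Flag.h ∧ pq = p ++ π.pos) ∨
             (π.flag = Flag.b ∧ StrictPrefix (p ++ π.pos) pq))
    (hside : Par p' pq ∨ StrictPrefix pq p')
    (hstep : RewriteAt R p' s t) (hallow : ¬ Forbidden Pi s p') :
    ∃ τ', subtermAt t p = some (subst τ' π.pat) := by
  obtain ⟨r, hr, σ, hl, hrp⟩ := hstep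
  have hppq : (p ++ π.pos) <+: pq := by
    rcases hforb with ⟨_, rfl⟩ | ⟨_, hsp⟩
    · exact List.prefix_refl _
    · exact hsp.1
  have hnotpre : ¬ p' <+: pq := by
    intro hpre
    rcases hside with hpar | hstr
    · exact hpar.1 hpre
    · exact hstr.2 (hstr.1.sublist.antisymm hpre.sublist)
  -- trichotomy between p' and p
  by_cases hc1 : p' <+: p
  · exact absurd (hc1.trans ((p.prefix_append π.pos).trans hppq)) hnotpre
  by_cases hc2 : p <+: p'
  · -- step below p
    obtain ⟨q', rfl⟩ := hc2
    have hw : subtermAt (subst τ π.pat) q' = some (subst σ r.lhs) := by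
      rw [subtermAt_append, hmatch] at hl
      exact hl
    have hq'pos : ¬ q' <+: π.pos := by
      intro hpre
      exact hnotpre (((List.prefix_append_right_inj p).mpr hpre).trans hppq)
    -- in the b-case, exclude π.pos strict prefix of q'
    have hq'par : Par q' π.pos ∨ (π.flag = Flag.h ∧ StrictPrefix π.pos q') := by
      by_cases hpre : π.pos <+: q'
      · have hne : π.pos ≠ q' := fun h => hq'pos (h ▸ List.prefix_refl _)
        rcases hforb with ⟨hf, _⟩ | ⟨hf, _⟩
        · exact Or.inr ⟨hf, hpre, hne⟩
        · -- p' strictly below p ++ π.pos : forbidden, contradiction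
          exfalso
          apply hallow
          refine ⟨π, hπ, ?_⟩
          unfold PPat
          rw [hf]
          refine ⟨p ++ π.pos, ⟨p, τ, hmatch, rfl⟩, ?_⟩
          exact ⟨(List.prefix_append_right_inj p).mpr hpre,
            fun h => hne (List.append_cancel_left h)⟩
      · exact Or.inl ⟨hq'pos, hpre⟩
    rcases subtermAt_subst hw with ⟨g, us, h1, h2⟩ | ⟨q1, q2, x, rfl, h1, h2⟩
    · -- overlap with the pattern at a non-variable position: contradicts stability
      exfalso
      have hov : OverlapsAt r π.pat q' := ⟨Tm.app g us, h1, ⟨g, us, rfl⟩, σ, τ, h2⟩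
      rcases hst.2 with ⟨hf, hno⟩ | ⟨hf, hno⟩
      · -- flag b
        rcases hq'par with hp | ⟨hf', _⟩
        · exact hno r hr q' hp hov
        · rw [hf] at hf'; cases hf'
      · -- flag h
        rcases hq'par with hp | ⟨_, hsp⟩
        · exact hno r hr q' (Or.inl hp) hov
        · exact hno r hr q' (Or.inr hsp) hov
    · -- step inside the substitution part
      obtain ⟨w', hw'⟩ := replaceAt_isSome h2 (subst σ r.rhs)
      have hrep := replaceAt_subst_var hst.1 h1 hw'
      obtain ⟨tp, htp1, htp2⟩ := replaceAt_append_of_subterm hrp hmatch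
      rw [hrep] at htp1
      injection htp1 with htp1
      exact ⟨Function.update τ x w', htp1 ▸ htp2⟩
  · -- parallel step
    exact ⟨τ, (subtermAt_replaceAt_par ⟨hc1, hc2⟩ hrp).symm ▸ hmatch⟩

/-- if the stable pattern `π ∈ Π` matches `s|_p` (via `τ`) and
thereby forbids the position `p.q` in `s`, and `s →*_{R,Π} t` by steps each at a
position parallel to or strictly below `p.q`, then `p.q` is forbidden in `t`. -/
theorem stable_pattern_persists_many {F : Type} {ar : F → ℕ}
    (R : Set (Rule F ar)) (Pi : Set (Pattern F ar))
    (hR : IsTRS R)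
    (hwf : ∀ π ∈ Pi, IsPos π.pat π.pos)
    (π : Pattern F ar) (hπ : π ∈ Pi) (hst : StablePat R π)
    (s t : Tm F ar) (p pq : List ℕ) (τ : ℕ → Tm F ar)
    (hmatch : subtermAt s p = some (subst τ π.pat))
    (hforb : (π.flag = Flag.h ∧ pq = p ++ π.pos) ∨
             (π.flag = Flag.b ∧ StrictPrefix (p ++ π.pos) pq))
    (hred : Relation.ReflTransGen
      (fun a b => ∃ p', (Par p' pq ∨ StrictPrefix pq p') ∧ FPStepAt R Pi p' a b)
      s t) :
    Forbidden Pi t pq := by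
  have key : ∃ τ', subtermAt t p = some (subst τ' π.pat) := by
    induction hred with
    | refl => exact ⟨τ, hmatch⟩
    | tail hab hbc ih =>
      obtain ⟨τ', hτ'⟩ := ih
      obtain ⟨p', hside, hstep, hallow⟩ := hbc
      exact stable_step_preserve hπ hst hτ' hforb hside hstep hallow
  obtain ⟨τ', hτ'⟩ := key
  refine ⟨π, hπ, ?_⟩
  rcases hforb with ⟨hf, rfl⟩ | ⟨hf, hsp⟩
  · unfold PPat
    rw [hf]
    exact ⟨p, τ', hτ', rfl⟩
  · unfold PPat
    rw [hf]
    exact ⟨p ++ π.pos, ⟨p, τ', hτ', rfl⟩, hsp⟩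

end FP
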